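/- arXiv:2202.00511 — 3 statements merged into one kernel-verified Lean document; each statement's English description precedes it below -/
import Mathlib

section
/- Let Ω be a nonempty set and let ε₁, ε₂ : Ω → ℝ^{3×3} be matrix-valued maps such that ‖εᵢ(x)‖_max ≤ K for all x ∈ Ω (i = 1, 2) and such that both ε₁ and ε₂ are uniformly coercive, i.e. for each i there exists c > 0 with ⟨εᵢ(x)ξ, ξ⟩ ≥ c‖ξ‖² for all x ∈ Ω and ξ ∈ ℝ³. Define c_{εᵢ} := sup { c ∈ ℝ : ⟨εᵢ(x)ξ, ξ⟩ ≥ c‖ξ‖² for all x ∈ Ω and all ξ ∈ ℝ³ }. If ‖ε₁(x) − ε₂(x)‖_max ≤ δ for all x ∈ Ω, then |c_{ε₁} − c_{ε₂}| ≤ 3δ. -/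
/-- The max-entry norm of a real 3×3 matrix: `max_{1 ≤ i,j ≤ 3} |M i j|`. -/
noncomputable def maxNorm (M : Matrix (Fin 3) (Fin 3) ℝ) : ℝ :=
  Finset.univ.sup' Finset.univ_nonempty fun i =>
    Finset.univ.sup' Finset.univ_nonempty fun j => |M i j|

/-- The Euclidean norm on ℝ³. -/
noncomputable def enorm3 (ξ : Fin 3 → ℝ) : ℝ := Real.sqrt (∑ i, ξ i ^ 2)

/-- The Euclidean inner product on ℝ³. -/
def edot (x y : Fin 3 → ℝ) : ℝ := ∑ i, x i * y i

/-- The optimal coercivity constant of a matrix field `ε` on `Ω`: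
`c_ε = sup { c : ⟨ε(x)ξ, ξ⟩ ≥ c‖ξ‖² for all x ∈ Ω, ξ ∈ ℝ³ }`. -/
noncomputable def coercConst {Ω : Type*} (ε : Ω → Matrix (Fin 3) (Fin 3) ℝ) : ℝ :=
  sSup {c : ℝ | ∀ (x : Ω) (ξ : Fin 3 → ℝ), c * enorm3 ξ ^ 2 ≤ edot ((ε x).mulVec ξ) ξ}

lemma term_bound (A x y δ : ℝ) (h : |A| ≤ δ) : -(δ * (x ^ 2 + y ^ 2) / 2) ≤ A * (x * y) := by
  have h2 : |x * y| ≤ (x ^ 2 + y ^ 2) / 2 :=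
    abs_le.mpr ⟨by nlinarith [sq_nonneg (x + y)], by nlinarith [sq_nonneg (x - y)]⟩
  have h4 : |A * (x * y)| ≤ δ * ((x ^ 2 + y ^ 2) / 2) := by
    rw [abs_mul]
    exact mul_le_mul h h2 (abs_nonneg _) ((abs_nonneg A).trans h)
  have h5 := neg_abs_le (A * (x * y))
  linarith

lemma entry_le (A : Matrix (Fin 3) (Fin 3) ℝ) (i j : Fin 3) : |A i j| ≤ maxNorm A := by
  refine le_trans ?_ (Finset.le_sup' (fun i => Finset.univ.sup' Finset.univ_nonempty fun j => |A i j|) (Finset.mem_univ i))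
  exact Finset.le_sup' (fun j => |A i j|) (Finset.mem_univ j)

lemma enorm3_sq (ξ : Fin 3 → ℝ) : enorm3 ξ ^ 2 = ∑ i, ξ i ^ 2 := by
  rw [enorm3, Real.sq_sqrt]
  positivity

lemma main_bound (A : Matrix (Fin 3) (Fin 3) ℝ) (δ : ℝ) (h : ∀ i j, |A i j| ≤ δ)
    (ξ : Fin 3 → ℝ) : -(3 * δ * (∑ i, ξ i ^ 2)) ≤ edot (A.mulVec ξ) ξ := by
  have t := fun i j => term_bound (A i j) (ξ j) (ξ i) δ (h i j)
  have t00 := t 0 0; have t01 := t 0 1; have t02 := t 0 2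
  have t10 := t 1 0; have t11 := t 1 1; have t12 := t 1 2
  have t20 := t 2 0; have t21 := t 2 1; have t22 := t 2 2
  simp only [edot, Matrix.mulVec, dotProduct, Fin.sum_univ_three]
  nlinarith [t00, t01, t02, t10, t11, t12, t20, t21, t22]

lemma shift_mem {Ω : Type*} (ε₁ ε₂ : Ω → Matrix (Fin 3) (Fin 3) ℝ) (δ : ℝ)
    (hδ : ∀ x i j, |(ε₁ x - ε₂ x) i j| ≤ δ) (c : ℝ)
    (hc : ∀ (x : Ω) (ξ : Fin 3 → ℝ), c * enorm3 ξ ^ 2 ≤ edot ((ε₂ x).mulVec ξ) ξ) :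
    ∀ (x : Ω) (ξ : Fin 3 → ℝ), (c - 3 * δ) * enorm3 ξ ^ 2 ≤ edot ((ε₁ x).mulVec ξ) ξ := by
  intro x ξ
  have h1 := main_bound (ε₁ x - ε₂ x) δ (hδ x) ξ
  have h2 := hc x ξ
  have hsplit : edot ((ε₁ x).mulVec ξ) ξ
      = edot ((ε₂ x).mulVec ξ) ξ + edot ((ε₁ x - ε₂ x).mulVec ξ) ξ := by
    rw [Matrix.sub_mulVec]
    simp only [edot, Pi.sub_apply, sub_mul, Finset.sum_sub_distrib]
    ring
  rw [hsplit, enorm3_sq] at *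
  nlinarith [h1, h2]

/-- If two uniformly bounded, uniformly coercive matrix fields `ε₁, ε₂` on a nonempty
set `Ω` satisfy `‖ε₁(x) − ε₂(x)‖_max ≤ δ` for all `x`, then their optimal coercivity
constants satisfy `|c_{ε₁} − c_{ε₂}| ≤ 3δ`. -/
theorem stmt2 {Ω : Type*} [Nonempty Ω] (ε₁ ε₂ : Ω → Matrix (Fin 3) (Fin 3) ℝ) (K δ : ℝ)
    (hK1 : ∀ x, maxNorm (ε₁ x) ≤ K) (hK2 : ∀ x, maxNorm (ε₂ x) ≤ K)
    (hc1 : ∃ c > 0, ∀ (x : Ω) (ξ : Fin 3 → ℝ), c * enorm3 ξ ^ 2 ≤ edot ((ε₁ x).mulVec ξ) ξ)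
    (hc2 : ∃ c > 0, ∀ (x : Ω) (ξ : Fin 3 → ℝ), c * enorm3 ξ ^ 2 ≤ edot ((ε₂ x).mulVec ξ) ξ)
    (hδ : ∀ x, maxNorm (ε₁ x - ε₂ x) ≤ δ) :
    |coercConst ε₁ - coercConst ε₂| ≤ 3 * δ := by
  set S₁ := {c : ℝ | ∀ (x : Ω) (ξ : Fin 3 → ℝ), c * enorm3 ξ ^ 2 ≤ edot ((ε₁ x).mulVec ξ) ξ}
  set S₂ := {c : ℝ | ∀ (x : Ω) (ξ : Fin 3 → ℝ), c * enorm3 ξ ^ 2 ≤ edot ((ε₂ x).mulVec ξ) ξ}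
  obtain ⟨c₁, _, hc₁⟩ := hc1
  obtain ⟨c₂, _, hc₂⟩ := hc2
  have hne₁ : S₁.Nonempty := ⟨c₁, hc₁⟩
  have hne₂ : S₂.Nonempty := ⟨c₂, hc₂⟩
  obtain ⟨x₀⟩ := ‹Nonempty Ω›
  have hξ0 : enorm3 ![(1:ℝ), 0, 0] ^ 2 = 1 := by
    rw [enorm3_sq]; simp [Fin.sum_univ_three]
  have hed : ∀ A : Matrix (Fin 3) (Fin 3) ℝ, edot (A.mulVec ![(1:ℝ), 0, 0]) ![(1:ℝ), 0, 0] = A 0 0 := by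
    intro A
    simp [edot, Matrix.mulVec, dotProduct, Fin.sum_univ_three]
  have hbdd : ∀ (ε : Ω → Matrix (Fin 3) (Fin 3) ℝ), (∀ x, maxNorm (ε x) ≤ K) →
      BddAbove {c : ℝ | ∀ (x : Ω) (ξ : Fin 3 → ℝ), c * enorm3 ξ ^ 2 ≤ edot ((ε x).mulVec ξ) ξ} := by
    intro ε hK
    refine ⟨K, fun c hc => ?_⟩
    have h := hc x₀ ![(1:ℝ), 0, 0]
    rw [hξ0, hed] at h
    have := (abs_le.mp ((entry_le (ε x₀) 0 0).trans (hK x₀))).2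
    linarith
  have hbdd₁ : BddAbove S₁ := hbdd ε₁ hK1
  have hbdd₂ : BddAbove S₂ := hbdd ε₂ hK2
  have he : ∀ x i j, |(ε₁ x - ε₂ x) i j| ≤ δ := fun x i j =>
    (entry_le _ i j).trans (hδ x)
  have he' : ∀ x i j, |(ε₂ x - ε₁ x) i j| ≤ δ := by
    intro x i j
    have := he x i j
    simp only [Matrix.sub_apply] at *
    rwa [abs_sub_comm]
  have hle1 : sSup S₂ ≤ sSup S₁ + 3 * δ := by
    apply csSup_le hne₂
    intro c hc
    have hmem : c - 3 * δ ∈ S₁ := shift_mem ε₁ ε₂ δ he c hc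
    have := le_csSup hbdd₁ hmem
    linarith
  have hle2 : sSup S₁ ≤ sSup S₂ + 3 * δ := by
    apply csSup_le hne₁
    intro c hc
    have hmem : c - 3 * δ ∈ S₂ := shift_mem ε₂ ε₁ δ he' c hc
    have := le_csSup hbdd₂ hmem
    linarith
  rw [coercConst, coercConst]
  rw [abs_le]
  constructor <;> [linarith [hle1]; linarith [hle2]]
end

section
/- Let Ω ⊆ ℝ³ be open, let ε₁, ε₂ : Ω → ℝ^{3×3} be differentiable matrix fields, and suppose N₁ is a W^{1,∞}-bound for ε₁ on Ω, N₋ is a W^{1,∞}-bound for ε₁ − ε₂ on Ω, and N₊ is a W^{1,∞}-bound for ε₁ + ε₂ on Ω. Let u : Ω → ℝ³ be differentiable, and suppose the functions x ↦ ‖u(x)‖², x ↦ |Du(x)|², x ↦ |div(ε₁u)(x)|² and x ↦ |div(ε₂u)(x)|² are integrable on Ω. Then | ∫_Ω |div(ε₁u)(x)|² dx − ∫_Ω |div(ε₂u)(x)|² dx | ≤ 54√3 · (N₁ + N₋ + N₊) · N₋ · ( ∫_Ω ‖u(x)‖² dx + ∫_Ω |Du(x)|² dx ). -/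
open MeasureTheory

/-- The partial derivative in the `i`-th coordinate direction of a function
`f : ℝ³ → ℝ` at `x`. -/
noncomputable def pd (f : (Fin 3 → ℝ) → ℝ) (i : Fin 3) (x : Fin 3 → ℝ) : ℝ :=
  fderiv ℝ f x (Pi.single i 1)

/-- The divergence of the matrix-vector product `εu` at `x`:
`div(εu)(x) = ∑ i ∂ᵢ (εu)ᵢ(x)`. -/
noncomputable def divE (ε : (Fin 3 → ℝ) → Matrix (Fin 3) (Fin 3) ℝ)
    (u : (Fin 3 → ℝ) → (Fin 3 → ℝ)) (x : Fin 3 → ℝ) : ℝ :=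
  ∑ i, pd (fun y => (ε y).mulVec (u y) i) i x

/-- `|Du(x)|² = ∑_{i,j} (∂ᵢ uⱼ(x))²`. -/
noncomputable def Du2 (u : (Fin 3 → ℝ) → (Fin 3 → ℝ)) (x : Fin 3 → ℝ) : ℝ :=
  ∑ i, ∑ j, pd (fun y => u y j) i x ^ 2

/-- `N` is a `W^{1,∞}`-bound for the matrix field `ε` on `Ω`: all entries and all
their first partial derivatives are bounded by `N` on `Ω`. -/
def W1Bound (ε : (Fin 3 → ℝ) → Matrix (Fin 3) (Fin 3) ℝ) (Ω : Set (Fin 3 → ℝ)) (N : ℝ) : Prop :=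
  ∀ x ∈ Ω, ∀ i j : Fin 3, |ε x i j| ≤ N ∧ ∀ k : Fin 3, |pd (fun y => ε y i j) k x| ≤ N

lemma divE_expand (ε : (Fin 3 → ℝ) → Matrix (Fin 3) (Fin 3) ℝ)
    (u : (Fin 3 → ℝ) → (Fin 3 → ℝ)) (x : Fin 3 → ℝ)
    (hε : ∀ i j, DifferentiableAt ℝ (fun y => ε y i j) x)
    (hu : ∀ j, DifferentiableAt ℝ (fun y => u y j) x) :
    divE ε u x = ∑ i, ∑ j, (pd (fun y => ε y i j) i x * u x j
      + ε x i j * pd (fun y => u y j) i x) := by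
  unfold divE pd
  refine Finset.sum_congr rfl fun i _ => ?_
  have h1 : (fun y => (ε y).mulVec (u y) i) = fun y => ∑ j, ε y i j * u y j := by
    funext y; simp [Matrix.mulVec, dotProduct]
  rw [h1, fderiv_fun_sum (A := fun j y => ε y i j * u y j) fun j _ => (hε i j).mul (hu j)]
  rw [ContinuousLinearMap.sum_apply]
  refine Finset.sum_congr rfl fun j _ => ?_
  rw [fderiv_fun_mul (hε i j) (hu j)]
  simp [smul_eq_mul]; ring

lemma divE_sq_le (ε : (Fin 3 → ℝ) → Matrix (Fin 3) (Fin 3) ℝ)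
    (u : (Fin 3 → ℝ) → (Fin 3 → ℝ)) (x : Fin 3 → ℝ) (N : ℝ)
    (hε : ∀ i j, DifferentiableAt ℝ (fun y => ε y i j) x)
    (hu : ∀ j, DifferentiableAt ℝ (fun y => u y j) x)
    (hb : ∀ i j : Fin 3, |ε x i j| ≤ N ∧ ∀ k : Fin 3, |pd (fun y => ε y i j) k x| ≤ N) :
    divE ε u x ^ 2 ≤ 54 * N ^ 2 * (enorm3 (u x) ^ 2 + Du2 u x) := by
  have hN0 : 0 ≤ N := le_trans (abs_nonneg _) (hb 0 0).1
  set T : ℝ := ∑ i : Fin 3, ∑ j : Fin 3, (|u x j| + |pd (fun y => u y j) i x|) with hT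
  have hT0 : 0 ≤ T := by
    refine Finset.sum_nonneg fun i _ => Finset.sum_nonneg fun j _ => ?_
    positivity
  have h1 : |divE ε u x| ≤ N * T := by
    rw [divE_expand ε u x hε hu, hT, Finset.mul_sum]
    refine le_trans (Finset.abs_sum_le_sum_abs _ _) (Finset.sum_le_sum fun i _ => ?_)
    rw [Finset.mul_sum]
    refine le_trans (Finset.abs_sum_le_sum_abs _ _) (Finset.sum_le_sum fun j _ => ?_)
    calc |pd (fun y => ε y i j) i x * u x j + ε x i j * pd (fun y => u y j) i x|
        ≤ |pd (fun y => ε y i j) i x| * |u x j| + |ε x i j| * |pd (fun y => u y j) i x| := by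
          refine le_trans (abs_add_le _ _) ?_
          rw [abs_mul, abs_mul]
      _ ≤ N * |u x j| + N * |pd (fun y => u y j) i x| :=
          add_le_add (mul_le_mul ((hb i j).2 i) le_rfl (abs_nonneg _) hN0)
            (mul_le_mul ((hb i j).1) le_rfl (abs_nonneg _) hN0)
      _ = N * (|u x j| + |pd (fun y => u y j) i x|) := by ring
  have h2 : T ^ 2 ≤ 54 * (enorm3 (u x) ^ 2 + Du2 u x) := by
    have he : enorm3 (u x) ^ 2 = ∑ j, u x j ^ 2 := by
      rw [enorm3, Real.sq_sqrt]; positivity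
    have hcs : T ^ 2 ≤ 9 * ∑ p : Fin 3 × Fin 3, (|u x p.2| + |pd (fun y => u y p.2) p.1 x|) ^ 2 := by
      have := sq_sum_le_card_mul_sum_sq
        (s := (Finset.univ : Finset (Fin 3 × Fin 3)))
        (f := fun p => |u x p.2| + |pd (fun y => u y p.2) p.1 x|)
      simpa [hT, ← Finset.sum_product', Fintype.card_prod] using this
    refine hcs.trans ?_
    have hterm : ∀ p : Fin 3 × Fin 3, (|u x p.2| + |pd (fun y => u y p.2) p.1 x|) ^ 2
        ≤ 2 * (u x p.2 ^ 2 + pd (fun y => u y p.2) p.1 x ^ 2) := by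
      intro p
      nlinarith [sq_abs (u x p.2), sq_abs (pd (fun y => u y p.2) p.1 x),
        sq_nonneg (|u x p.2| - |pd (fun y => u y p.2) p.1 x|)]
    have : ∑ p : Fin 3 × Fin 3, (|u x p.2| + |pd (fun y => u y p.2) p.1 x|) ^ 2
        ≤ ∑ p : Fin 3 × Fin 3, 2 * (u x p.2 ^ 2 + pd (fun y => u y p.2) p.1 x ^ 2) :=
      Finset.sum_le_sum fun p _ => hterm p
    have h9 : 9 * (∑ p : Fin 3 × Fin 3, (|u x p.2| + |pd (fun y => u y p.2) p.1 x|) ^ 2)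
        ≤ 9 * ∑ p : Fin 3 × Fin 3, 2 * (u x p.2 ^ 2 + pd (fun y => u y p.2) p.1 x ^ 2) :=
      mul_le_mul_of_nonneg_left this (by norm_num)
    refine h9.trans ?_
    have hsplit : ∑ p : Fin 3 × Fin 3, 2 * (u x p.2 ^ 2 + pd (fun y => u y p.2) p.1 x ^ 2)
        = 2 * (3 * (∑ j, u x j ^ 2) + Du2 u x) := by
      rw [← Finset.univ_product_univ, Finset.sum_product, Du2]
      simp only [Fin.sum_univ_three]
      ring
    rw [hsplit, he, Du2]
    have hDu0 : (0:ℝ) ≤ ∑ i : Fin 3, ∑ j : Fin 3, pd (fun y => u y j) i x ^ 2 := by positivity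
    have hu0 : (0:ℝ) ≤ ∑ j, u x j ^ 2 := by positivity
    nlinarith
  have habs : divE ε u x ^ 2 = |divE ε u x| ^ 2 := (sq_abs _).symm
  rw [habs]
  calc |divE ε u x| ^ 2 ≤ (N * T) ^ 2 := by
        have := abs_nonneg (divE ε u x); nlinarith
    _ = N ^ 2 * T ^ 2 := by ring
    _ ≤ N ^ 2 * (54 * (enorm3 (u x) ^ 2 + Du2 u x)) := by
        exact mul_le_mul_of_nonneg_left h2 (by positivity)
    _ = 54 * N ^ 2 * (enorm3 (u x) ^ 2 + Du2 u x) := by ring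

/-- If `ε₁, ε₂` are differentiable matrix fields on an open `Ω ⊆ ℝ³` with
`W^{1,∞}`-bounds `N₁` for `ε₁`, `N₋` for `ε₁ − ε₂` and `N₊` for `ε₁ + ε₂`, and `u`
is a differentiable vector field with the relevant quantities integrable, then
`|∫_Ω |div(ε₁u)|² − ∫_Ω |div(ε₂u)|²| ≤ 54√3 (N₁+N₋+N₊) N₋ (∫_Ω ‖u‖² + ∫_Ω |Du|²)`. -/
theorem stmt10 (Ω : Set (Fin 3 → ℝ)) (hΩ : IsOpen Ω)
    (ε₁ ε₂ : (Fin 3 → ℝ) → Matrix (Fin 3) (Fin 3) ℝ)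
    (hd1 : ∀ x ∈ Ω, ∀ i j : Fin 3, DifferentiableAt ℝ (fun y => ε₁ y i j) x)
    (hd2 : ∀ x ∈ Ω, ∀ i j : Fin 3, DifferentiableAt ℝ (fun y => ε₂ y i j) x)
    (N₁ Nm Np : ℝ)
    (hN1 : W1Bound ε₁ Ω N₁)
    (hNm : W1Bound (fun y => ε₁ y - ε₂ y) Ω Nm)
    (hNp : W1Bound (fun y => ε₁ y + ε₂ y) Ω Np)
    (u : (Fin 3 → ℝ) → (Fin 3 → ℝ))
    (hdu : ∀ x ∈ Ω, ∀ j : Fin 3, DifferentiableAt ℝ (fun y => u y j) x)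
    (hi0 : IntegrableOn (fun x => enorm3 (u x) ^ 2) Ω)
    (hi1 : IntegrableOn (fun x => Du2 u x) Ω)
    (hi2 : IntegrableOn (fun x => divE ε₁ u x ^ 2) Ω)
    (hi3 : IntegrableOn (fun x => divE ε₂ u x ^ 2) Ω) :
    |(∫ x in Ω, divE ε₁ u x ^ 2) - ∫ x in Ω, divE ε₂ u x ^ 2| ≤
      54 * Real.sqrt 3 * (N₁ + Nm + Np) * Nm *
        ((∫ x in Ω, enorm3 (u x) ^ 2) + ∫ x in Ω, Du2 u x) := by
  set C : ℝ := 54 * Real.sqrt 3 * (N₁ + Nm + Np) * Nm with hC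
  have hsqrt3 : (1:ℝ) ≤ Real.sqrt 3 := by
    rw [show (1:ℝ) = Real.sqrt 1 from Real.sqrt_one.symm]
    exact Real.sqrt_le_sqrt (by norm_num)
  have key : ∀ x ∈ Ω, |divE ε₁ u x ^ 2 - divE ε₂ u x ^ 2|
      ≤ C * (enorm3 (u x) ^ 2 + Du2 u x) := by
    intro x hx
    have hN10 : 0 ≤ N₁ := le_trans (abs_nonneg _) (hN1 x hx 0 0).1
    have hNm0 : 0 ≤ Nm := le_trans (abs_nonneg _) (hNm x hx 0 0).1
    have hNp0 : 0 ≤ Np := le_trans (abs_nonneg _) (hNp x hx 0 0).1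
    have hP0 : 0 ≤ enorm3 (u x) ^ 2 + Du2 u x := by
      refine add_nonneg (sq_nonneg _) ?_
      unfold Du2; positivity
    have hdm : ∀ i j : Fin 3, DifferentiableAt ℝ (fun y => (ε₁ y - ε₂ y) i j) x :=
      fun i j => (hd1 x hx i j).sub (hd2 x hx i j)
    have hdp : ∀ i j : Fin 3, DifferentiableAt ℝ (fun y => (ε₁ y + ε₂ y) i j) x :=
      fun i j => (hd1 x hx i j).add (hd2 x hx i j)
    have pd_sub : ∀ i j k : Fin 3, pd (fun y => (ε₁ y - ε₂ y) i j) k x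
        = pd (fun y => ε₁ y i j) k x - pd (fun y => ε₂ y i j) k x := by
      intro i j k
      unfold pd
      have h : (fun y => (ε₁ y - ε₂ y) i j) = fun y => ε₁ y i j - ε₂ y i j := rfl
      rw [h, fderiv_fun_sub (hd1 x hx i j) (hd2 x hx i j)]
      simp
    have pd_add : ∀ i j k : Fin 3, pd (fun y => (ε₁ y + ε₂ y) i j) k x
        = pd (fun y => ε₁ y i j) k x + pd (fun y => ε₂ y i j) k x := by
      intro i j k
      unfold pd
      have h : (fun y => (ε₁ y + ε₂ y) i j) = fun y => ε₁ y i j + ε₂ y i j := rfl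
      rw [h, fderiv_fun_add (hd1 x hx i j) (hd2 x hx i j)]
      simp
    have hDeq : divE (fun y => ε₁ y - ε₂ y) u x = divE ε₁ u x - divE ε₂ u x := by
      rw [divE_expand _ u x hdm (hdu x hx), divE_expand ε₁ u x (hd1 x hx) (hdu x hx),
        divE_expand ε₂ u x (hd2 x hx) (hdu x hx), ← Finset.sum_sub_distrib]
      refine Finset.sum_congr rfl fun i _ => ?_
      rw [← Finset.sum_sub_distrib]
      refine Finset.sum_congr rfl fun j _ => ?_
      rw [pd_sub i j i]
      show _ * _ + (ε₁ x i j - ε₂ x i j) * _ = _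
      ring
    have hSeq : divE (fun y => ε₁ y + ε₂ y) u x = divE ε₁ u x + divE ε₂ u x := by
      rw [divE_expand _ u x hdp (hdu x hx), divE_expand ε₁ u x (hd1 x hx) (hdu x hx),
        divE_expand ε₂ u x (hd2 x hx) (hdu x hx), ← Finset.sum_add_distrib]
      refine Finset.sum_congr rfl fun i _ => ?_
      rw [← Finset.sum_add_distrib]
      refine Finset.sum_congr rfl fun j _ => ?_
      rw [pd_add i j i]
      show _ * _ + (ε₁ x i j + ε₂ x i j) * _ = _
      ring
    have hDsq := divE_sq_le (fun y => ε₁ y - ε₂ y) u x Nm hdm (hdu x hx) (hNm x hx)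
    have hSsq := divE_sq_le (fun y => ε₁ y + ε₂ y) u x Np hdp (hdu x hx) (hNp x hx)
    set D := divE (fun y => ε₁ y - ε₂ y) u x
    set S := divE (fun y => ε₁ y + ε₂ y) u x
    set P := enorm3 (u x) ^ 2 + Du2 u x
    have hfact : divE ε₁ u x ^ 2 - divE ε₂ u x ^ 2 = D * S := by
      rw [hDeq, hSeq]; ring
    rw [hfact, abs_mul]
    have hprod : |D| * |S| ≤ 54 * Nm * Np * P := by
      have h1 : (|D| * |S|) ^ 2 ≤ (54 * Nm * Np * P) ^ 2 := by
        have hm := mul_le_mul hDsq hSsq (sq_nonneg S) (by positivity)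
        calc (|D| * |S|) ^ 2 = D ^ 2 * S ^ 2 := by
              rw [mul_pow, sq_abs, sq_abs]
          _ ≤ (54 * Nm ^ 2 * P) * (54 * Np ^ 2 * P) := hm
          _ = (54 * Nm * Np * P) ^ 2 := by ring
      have h2 : 0 ≤ |D| * |S| := by positivity
      have h3 : 0 ≤ 54 * Nm * Np * P := by positivity
      nlinarith
    refine hprod.trans ?_
    rw [hC]
    nlinarith [mul_nonneg hNm0 hP0, mul_nonneg (mul_nonneg hN10 hNm0) hP0,
      mul_nonneg (mul_nonneg hNm0 hNm0) hP0, mul_nonneg (mul_nonneg hNp0 hNm0) hP0,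
      mul_nonneg (mul_nonneg (add_nonneg (add_nonneg hN10 hNm0) hNp0) hNm0) hP0]
  have hfint : IntegrableOn (fun x => divE ε₁ u x ^ 2 - divE ε₂ u x ^ 2) Ω := hi2.sub hi3
  have hgint : IntegrableOn (fun x => C * (enorm3 (u x) ^ 2 + Du2 u x)) Ω :=
    (hi0.add hi1).const_mul C
  rw [← integral_sub hi2 hi3]
  calc |∫ x in Ω, (divE ε₁ u x ^ 2 - divE ε₂ u x ^ 2)|
      ≤ ∫ x in Ω, |divE ε₁ u x ^ 2 - divE ε₂ u x ^ 2| := by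
        simpa using norm_integral_le_integral_norm (μ := volume.restrict Ω)
          (fun x => divE ε₁ u x ^ 2 - divE ε₂ u x ^ 2)
    _ ≤ ∫ x in Ω, C * (enorm3 (u x) ^ 2 + Du2 u x) :=
        setIntegral_mono_on hfint.abs hgint hΩ.measurableSet key
    _ = C * ∫ x in Ω, (enorm3 (u x) ^ 2 + Du2 u x) := integral_const_mul _ _
    _ = C * ((∫ x in Ω, enorm3 (u x) ^ 2) + ∫ x in Ω, Du2 u x) := by
        rw [integral_add hi0 hi1]
end

section
/- Let X and H be real Hilbert spaces, let ι : X → H be a continuous linear map, and set S := ι ∘ ι* : H → H, where ι* is the Hilbert-space adjoint of ι. Define B(u, v) := ⟨u, v⟩_X − ⟨ιu, ιv⟩_H for u, v ∈ X. Then for every real μ ≠ 0 and every u ∈ H, the following are equivalent: (i) u ≠ 0 and S u = μ u; (ii) there exists w ∈ X with w ≠ 0, ι w = u, and B(w, v) = (μ⁻¹ − 1) ⟨ι w, ι v⟩_H for all v ∈ X. -/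
/-- Abstract eigenvalue correspondence: for real Hilbert spaces `X`, `H`, a
continuous linear map `ι : X → H` and `S := ι ∘ ι*`, a real `μ ≠ 0` is an
eigenvalue of `S` with eigenvector `u ≠ 0` iff there is a nonzero `w ∈ X` with
`ι w = u` satisfying the weak formulation
`⟨w, v⟩_X − ⟨ιw, ιv⟩_H = (μ⁻¹ − 1)⟨ιw, ιv⟩_H` for all `v ∈ X`. -/
theorem stmt12 {X H : Type*}
    [NormedAddCommGroup X] [InnerProductSpace ℝ X] [CompleteSpace X]
    [NormedAddCommGroup H] [InnerProductSpace ℝ H] [CompleteSpace H]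
    (ι : X →L[ℝ] H) (μ : ℝ) (hμ : μ ≠ 0) (u : H) :
    (u ≠ 0 ∧ (ι.comp (ContinuousLinearMap.adjoint ι)) u = μ • u) ↔
      ∃ w : X, w ≠ 0 ∧ ι w = u ∧
        ∀ v : X, (inner ℝ w v : ℝ) - (inner ℝ (ι w) (ι v) : ℝ) =
          (μ⁻¹ - 1) * (inner ℝ (ι w) (ι v) : ℝ) := by
  constructor
  · rintro ⟨hu, hS⟩
    refine ⟨μ⁻¹ • (ContinuousLinearMap.adjoint ι) u, ?_, ?_, ?_⟩
    · intro hw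
      apply hu
      have : ι (μ⁻¹ • (ContinuousLinearMap.adjoint ι) u) = u := by
        rw [map_smul]
        simp only [ContinuousLinearMap.coe_comp', Function.comp_apply] at hS
        rw [hS, smul_smul, inv_mul_cancel₀ hμ, one_smul]
      rw [hw, map_zero] at this
      exact this.symm
    · rw [map_smul]
      simp only [ContinuousLinearMap.coe_comp', Function.comp_apply] at hS
      rw [hS, smul_smul, inv_mul_cancel₀ hμ, one_smul]
    · intro v
      have hιw : ι (μ⁻¹ • (ContinuousLinearMap.adjoint ι) u) = u := by
        rw [map_smul]
        simp only [ContinuousLinearMap.coe_comp', Function.comp_apply] at hS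
        rw [hS, smul_smul, inv_mul_cancel₀ hμ, one_smul]
      rw [hιw]
      rw [real_inner_smul_left, ContinuousLinearMap.adjoint_inner_left]
      ring
  · rintro ⟨w, hw, hιw, hweak⟩
    have key : ∀ v : X, (inner ℝ w v : ℝ) = μ⁻¹ * (inner ℝ (ι w) (ι v) : ℝ) := by
      intro v
      have := hweak v
      linarith
    have hadj : (ContinuousLinearMap.adjoint ι) (ι w) = μ • w := by
      apply ext_inner_right ℝ
      intro v
      rw [ContinuousLinearMap.adjoint_inner_left, real_inner_smul_left, key v]
      field_simp
    have hu0 : u ≠ 0 := by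
      intro hu
      apply hw
      have : (ContinuousLinearMap.adjoint ι) u = μ • w := by rw [← hιw]; exact hadj
      rw [hu, map_zero] at this
      have := this.symm
      rcases smul_eq_zero.mp this with h | h
      · exact absurd h hμ
      · exact h
    refine ⟨hu0, ?_⟩
    simp only [ContinuousLinearMap.coe_comp', Function.comp_apply]
    rw [← hιw, hadj, map_smul, hιw]
end
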